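/- Let z < 0, u₀ = (2/π²)(√(1−π²z) − 1), v₀ = −z − u₀, μ_Airy(a) = (1/π)√a·1_{a>0}, and μ_*(a) = [(1/π)√(a−u₀) + (1/(2π²)) log|(√(a−u₀)+√v₀)/(√(a−u₀)−√v₀)|]·1_{a>u₀}. Then the function a ↦ μ_*(a) − μ_Airy(a) is Lebesgue integrable on ℝ and ∫_ℝ (μ_*(a) − μ_Airy(a)) da = 0. -/

import Mathlib

open Real Filter Set MeasureTheory

/-- `u₀ = (2/π²)(√(1−π²z) − 1)`. -/
noncomputable def u0 (z : ℝ) : ℝ := 2 / π ^ 2 * (Real.sqrt (1 - π ^ 2 * z) - 1)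

/-- `v₀ = −z − u₀`. -/
noncomputable def v0 (z : ℝ) : ℝ := -z - u0 z

/-- The Airy equilibrium density `μ_Airy(a) = (1/π)√a·1_{a>0}`. -/
noncomputable def muAiry (a : ℝ) : ℝ := if 0 < a then 1 / π * Real.sqrt a else 0

/-- The optimal density
`μ_*(a) = [(1/π)√(a−u₀) + (1/(2π²)) log|(√(a−u₀)+√v₀)/(√(a−u₀)−√v₀)|]·1_{a>u₀}`. -/
noncomputable def mustar (z : ℝ) (a : ℝ) : ℝ :=
  if u0 z < a then
    1 / π * Real.sqrt (a - u0 z)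
      + 1 / (2 * π ^ 2) * Real.log |(Real.sqrt (a - u0 z) + Real.sqrt (v0 z))
          / (Real.sqrt (a - u0 z) - Real.sqrt (v0 z))|
  else 0

/-!
With `s = √(a - u₀)`, `t = √a` and `w = √v₀`, the function
`F(a) = 2/(3π) (s³ - t³) + ((s² - w²) log((s + w)/(s - w)) + 2ws) / (2π²)`
is a continuous primitive of `μ_* - μ_Airy` on `(0, ∞)` off `{u₀, u₀ + v₀}`, with `F(0) = 0`.
At infinity `F(a) = (2w/π² - u₀/π) s + O(1/s)`, and the coefficient vanishes because
`w = π u₀ / 2`, so `F → 0`. The integrand is at least `-√a/π` everywhere and nonnegative beyond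
`u₀ + v₀`, hence integrable, and its integral is `lim F - F(0) = 0`.
-/

open Topology

section LogBounds

variable {x : ℝ}

theorem two_mul_le_log_one_add_sub_log_one_sub (h0 : 0 ≤ x) (h1 : x < 1) :
    2 * x ≤ log (1 + x) - log (1 - x) := by
  have hsum := hasSum_log_sub_log_of_abs_lt_one (abs_lt.2 ⟨by linarith, h1⟩)
  simpa using le_hasSum hsum 0 fun k _ => by positivity

theorem log_one_add_sub_log_one_sub_le (h0 : 0 ≤ x) (h1 : x < 1) :
    log (1 + x) - log (1 - x) ≤ 2 * x / (1 - x ^ 2) := by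
  have hsum := hasSum_log_sub_log_of_abs_lt_one (abs_lt.2 ⟨by linarith, h1⟩)
  have hgeom : HasSum (fun k : ℕ => 2 * x * (x ^ 2) ^ k) (2 * x / (1 - x ^ 2)) := by
    simpa [div_eq_mul_inv] using
      (hasSum_geometric_of_lt_one (sq_nonneg x) (by nlinarith)).mul_left (2 * x)
  refine hasSum_le (fun k => ?_) hsum hgeom
  rw [pow_succ, pow_mul, mul_comm (_ ^ k) x, ← mul_assoc, mul_assoc 2]
  have hk : 1 / (2 * (k : ℝ) + 1) ≤ 1 := by
    rw [div_le_one (by positivity)]; linarith [k.cast_nonneg (α := ℝ)]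
  have : 0 ≤ x * (x ^ 2) ^ k := by positivity
  nlinarith

theorem log_add_sub_log_sub_bounds {s w : ℝ} (hw : 0 ≤ w) (hws : w < s) :
    2 * w / s ≤ log (s + w) - log (s - w) ∧
      (s ^ 2 - w ^ 2) * (log (s + w) - log (s - w)) ≤ 2 * w * s := by
  have hs : 0 < s := hw.trans_lt hws
  have hx0 : 0 ≤ w / s := by positivity
  have hx1 : w / s < 1 := (div_lt_one hs).2 hws
  have hlog : log (s + w) - log (s - w) = log (1 + w / s) - log (1 - w / s) := by
    rw [show s + w = s * (1 + w / s) by field_simp, show s - w = s * (1 - w / s) by field_simp,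
      log_mul hs.ne' (by positivity), log_mul hs.ne' (by linarith)]
    ring
  rw [hlog]
  refine ⟨by simpa [mul_div_assoc] using two_mul_le_log_one_add_sub_log_one_sub hx0 hx1, ?_⟩
  have hup := log_one_add_sub_log_one_sub_le hx0 hx1
  have hpos : 0 < s ^ 2 - w ^ 2 := by nlinarith
  calc (s ^ 2 - w ^ 2) * (log (1 + w / s) - log (1 - w / s))
      ≤ (s ^ 2 - w ^ 2) * (2 * (w / s) / (1 - (w / s) ^ 2)) := by gcongr
    _ = 2 * w * s := by field_simp

end LogBounds

section ImproperIntegrals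

variable {F f : ℝ → ℝ} {a b : ℝ}

/-- A derivative bounded below by `K` is integrable, since `F x - K x` has a nonnegative
derivative. -/
theorem integrableOn_Ioi_and_integral_eq_of_hasDerivAt_of_le {K : ℝ} (hab : a ≤ b)
    (hcont : ContinuousOn F (Icc a b)) (hderiv : ∀ x ∈ Ioo a b, HasDerivAt F (f x) x)
    (hK : ∀ x ∈ Ioo a b, K ≤ f x) (htail : IntegrableOn f (Ioi b)) :
    IntegrableOn f (Ioi a) ∧ ∫ x in Ioi a, f x = F b - F a + ∫ x in Ioi b, f x := by
  have hshift : IntegrableOn (fun x => f x - K) (Ioc a b) :=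
    intervalIntegral.integrableOn_deriv_of_nonneg (g := fun x => F x - x * K)
      (hcont.sub (continuousOn_id.mul continuousOn_const))
      (fun x hx =>
        ((hderiv x hx).sub ((hasDerivAt_id' x).mul_const K)).congr_deriv (by rw [one_mul]))
      (fun x hx => sub_nonneg.2 (hK x hx))
  have hIoc : IntegrableOn f (Ioc a b) :=
    (hshift.add (integrableOn_const measure_Ioc_lt_top.ne)).congr_fun
      (fun x _ => sub_add_cancel _ K) measurableSet_Ioc
  have hFTC : ∫ x in Ioc a b, f x = F b - F a := by
    rw [← intervalIntegral.integral_of_le hab]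
    exact intervalIntegral.integral_eq_sub_of_hasDerivAt_of_le hab hcont hderiv
      ((intervalIntegrable_iff_integrableOn_Ioc_of_le hab).2 hIoc)
  rw [← Ioc_union_Ioi_eq_Ioi hab]
  refine ⟨hIoc.union htail, ?_⟩
  rw [setIntegral_union Ioc_disjoint_Ioi_same measurableSet_Ioi hIoc htail, hFTC]

theorem integrable_and_integral_eq_setIntegral_Ioi (hzero : ∀ x ≤ a, f x = 0)
    (hf : IntegrableOn f (Ioi a)) : Integrable f ∧ ∫ x, f x = ∫ x in Ioi a, f x := by
  have hIic : IntegrableOn f (Iic a) :=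
    integrableOn_zero.congr_fun (fun x hx => (hzero x hx).symm) measurableSet_Iic
  refine ⟨by simpa using hIic.union hf, ?_⟩
  rw [← intervalIntegral.integral_Iic_add_Ioi hIic hf,
    setIntegral_congr_fun measurableSet_Iic hzero]
  simp

end ImproperIntegrals

theorem hasDerivAt_comp_sqrt {G : ℝ → ℝ} {g x : ℝ} (hx : x ≠ 0)
    (hG : 0 < x → HasDerivAt G (2 * √x * g) √x) (hg : x < 0 → g = 0) :
    HasDerivAt (fun y => G √y) g x := by
  rcases hx.lt_or_gt with hneg | hpos
  · rw [hg hneg]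
    refine (hasDerivAt_const x (G 0)).congr_of_eventuallyEq ?_
    filter_upwards [Iio_mem_nhds hneg] with y hy
    rw [sqrt_eq_zero'.2 hy.le]
  · have hs : 0 < √x := sqrt_pos.2 hpos
    refine ((hG hpos).comp x (hasDerivAt_sqrt hpos.ne')).congr_deriv ?_
    field_simp

theorem hasDerivAt_sqrt_pow_three {x : ℝ} (hx : x ≠ 0) :
    HasDerivAt (fun y => √y ^ 3) (3 / 2 * √x) x :=
  hasDerivAt_comp_sqrt hx
    (fun _ => (hasDerivAt_pow 3 √x).congr_deriv (by push_cast; ring))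
    (fun hneg => by rw [sqrt_eq_zero'.2 hneg.le, mul_zero])

noncomputable def logCorrection (w s : ℝ) : ℝ :=
  (s ^ 2 - w ^ 2) * (log (s + w) - log (s - w)) + 2 * w * s

-- `x log x` extends continuously to `x = 0`, which takes care of `s = w` and `s = -w`.
theorem continuous_logCorrection (w : ℝ) : Continuous (logCorrection w) := by
  have h₁ : Continuous fun s : ℝ => (s + w) * log (s + w) :=
    continuous_mul_log.comp (continuous_add_const w)
  have h₂ : Continuous fun s : ℝ => (s - w) * log (s - w) :=
    continuous_mul_log.comp (continuous_sub_right w)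
  have heq : logCorrection w = fun s =>
      (s - w) * ((s + w) * log (s + w)) - (s + w) * ((s - w) * log (s - w)) + 2 * w * s := by
    funext s
    unfold logCorrection
    ring
  rw [heq]
  fun_prop

theorem hasDerivAt_logCorrection {w s : ℝ} (h₁ : s + w ≠ 0) (h₂ : s - w ≠ 0) :
    HasDerivAt (logCorrection w) (2 * s * (log (s + w) - log (s - w))) s := by
  have hlog₁ := ((hasDerivAt_id' s).add_const w).log h₁
  have hlog₂ := ((hasDerivAt_id' s).sub_const w).log h₂
  have hsq := (hasDerivAt_pow 2 s).sub_const (w ^ 2)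
  refine ((hsq.mul (hlog₁.sub hlog₂)).add ((hasDerivAt_id' s).const_mul (2 * w))).congr_deriv ?_
  simp only [Pi.sub_apply]
  field_simp
  ring

theorem hasDerivAt_logCorrection_sqrt {w x : ℝ} (hw : 0 < w) (hx : x ≠ 0) (hxw : x ≠ w ^ 2) :
    HasDerivAt (fun y => logCorrection w √y) (log |(√x + w) / (√x - w)|) x := by
  refine hasDerivAt_comp_sqrt hx (fun hpos => ?_) (fun hneg => ?_)
  · have hs : √x + w ≠ 0 := (add_pos_of_nonneg_of_pos (sqrt_nonneg x) hw).ne'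
    have hs' : √x - w ≠ 0 := fun h => hxw (by rw [← sq_sqrt hpos.le, sub_eq_zero.1 h])
    rw [log_abs, log_div hs hs']
    exact hasDerivAt_logCorrection hs hs'
  · rw [sqrt_eq_zero'.2 hneg.le, zero_add, zero_sub, div_neg, div_self hw.ne', abs_neg, abs_one,
      log_one]

theorem abs_cube_sub_cube_add_mul_le {s t : ℝ} (hs : 0 < s) (hst : s ≤ t) :
    |2 / 3 * (s ^ 3 - t ^ 3) + (t ^ 2 - s ^ 2) * s| ≤ (t ^ 2 - s ^ 2) ^ 2 / s := by
  have hfactor :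
      2 / 3 * (s ^ 3 - t ^ 3) + (t ^ 2 - s ^ 2) * s = -((t - s) ^ 2 * (2 * t + s) / 3) := by
    ring
  have hnonneg : 0 ≤ (t - s) ^ 2 * (2 * t + s) / 3 := by
    have : 0 ≤ 2 * t + s := by linarith
    positivity
  rw [hfactor, abs_neg, abs_of_nonneg hnonneg, le_div_iff₀ hs]
  have : s * (2 * t + s) ≤ 3 * (t + s) ^ 2 := by nlinarith
  calc (t - s) ^ 2 * (2 * t + s) / 3 * s = (t - s) ^ 2 * (s * (2 * t + s)) / 3 := by ring
    _ ≤ (t - s) ^ 2 * (3 * (t + s) ^ 2) / 3 := by gcongr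
    _ = (t ^ 2 - s ^ 2) ^ 2 := by ring

theorem abs_logCorrection_sub_le {w s : ℝ} (hw : 0 ≤ w) (hws : w < s) :
    |logCorrection w s - 4 * w * s| ≤ 2 * w ^ 3 / s := by
  have hs : 0 < s := hw.trans_lt hws
  obtain ⟨hlower, hupper⟩ := log_add_sub_log_sub_bounds hw hws
  have hlower' : 2 * w * s - 2 * w ^ 3 / s ≤ (s ^ 2 - w ^ 2) * (log (s + w) - log (s - w)) :=
    calc 2 * w * s - 2 * w ^ 3 / s = (s ^ 2 - w ^ 2) * (2 * w / s) := by field_simp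
      _ ≤ _ := by gcongr; nlinarith
  rw [abs_le]
  unfold logCorrection
  constructor <;> nlinarith [show 0 ≤ 2 * w ^ 3 / s by positivity]

section ZeroMass

variable {z : ℝ}

theorem u0_pos (hz : z < 0) : 0 < u0 z := by
  have h : 1 < √(1 - π ^ 2 * z) := by
    rw [lt_sqrt zero_le_one]
    nlinarith [mul_pos (pow_pos pi_pos 2) (neg_pos.2 hz)]
  unfold u0
  have : 0 < 2 / π ^ 2 := by positivity
  nlinarith

/-- The identity behind the zero mass: it cancels the growing term of `massPrimitive`. -/
theorem sqrt_v0_eq (hz : z < 0) : √(v0 z) = π * u0 z / 2 := by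
  have hr : √(1 - π ^ 2 * z) ^ 2 = 1 - π ^ 2 * z := sq_sqrt (by nlinarith [pi_pos])
  have hv : v0 z = (π * u0 z / 2) ^ 2 := by
    unfold v0 u0
    generalize √(1 - π ^ 2 * z) = r at hr ⊢
    field_simp
    linear_combination -hr
  rw [hv, sqrt_sq (by linarith [mul_pos pi_pos (u0_pos hz)])]

theorem v0_pos (hz : z < 0) : 0 < v0 z := by
  have : 0 < √(v0 z) := by rw [sqrt_v0_eq hz]; linarith [mul_pos pi_pos (u0_pos hz)]
  exact sqrt_pos.1 this

theorem muAiry_eq (a : ℝ) : muAiry a = √a / π := by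
  unfold muAiry
  split_ifs with ha
  · ring
  · rw [sqrt_eq_zero'.2 (not_lt.1 ha), zero_div]

-- No case split is needed: for `a ≤ u₀` the right side vanishes, as `√(a - u₀) = 0`.
theorem mustar_eq (z a : ℝ) :
    mustar z a = √(a - u0 z) / π
      + log |(√(a - u0 z) + √(v0 z)) / (√(a - u0 z) - √(v0 z))| / (2 * π ^ 2) := by
  unfold mustar
  split_ifs with ha
  · ring
  · rw [sqrt_eq_zero'.2 (by linarith [not_lt.1 ha]), zero_add, zero_sub, div_neg, abs_neg]
    rcases eq_or_ne (√(v0 z)) 0 with h | h <;> simp [h]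

theorem mustar_nonneg (z a : ℝ) : 0 ≤ mustar z a := by
  rw [mustar_eq]
  have hs := sqrt_nonneg (a - u0 z)
  have hw := sqrt_nonneg (v0 z)
  have hlog : 0 ≤ log |(√(a - u0 z) + √(v0 z)) / (√(a - u0 z) - √(v0 z))| := by
    rcases eq_or_ne (√(a - u0 z) - √(v0 z)) 0 with h | h
    · simp [h]
    rw [abs_div, abs_of_nonneg (add_nonneg hs hw)]
    exact log_nonneg ((one_le_div (abs_pos.2 h)).2 (abs_sub_le_iff.2 ⟨by linarith, by linarith⟩))
  positivity

theorem neg_sqrt_div_pi_le_mustar_sub_muAiry {a b : ℝ} (hab : a ≤ b) :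
    -(√b / π) ≤ mustar z a - muAiry a := by
  rw [muAiry_eq]
  have : √a / π ≤ √b / π := by gcongr
  linarith [mustar_nonneg z a]

theorem mustar_sub_muAiry_of_nonpos (hz : z < 0) {a : ℝ} (ha : a ≤ 0) :
    mustar z a - muAiry a = 0 := by
  rw [mustar, muAiry, if_neg (by linarith [u0_pos hz]), if_neg ha.not_gt, sub_zero]

/-- Beyond `u₀ + v₀` the logarithm dominates, because `log((s + w)/(s − w)) ≥ 2w/s` and
`√a − √(a − u₀) ≤ u₀ / (2√(a − u₀))` balance exactly when `w = π u₀ / 2`. -/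
theorem mustar_sub_muAiry_nonneg (hz : z < 0) {a : ℝ} (ha : u0 z + v0 z < a) :
    0 ≤ mustar z a - muAiry a := by
  have hv := v0_pos hz
  have hw : √(v0 z) < √(a - u0 z) := sqrt_lt_sqrt hv.le (by linarith)
  have hs : 0 < √(a - u0 z) := (sqrt_nonneg _).trans_lt hw
  have hst : √(a - u0 z) ≤ √a := sqrt_le_sqrt (by linarith [u0_pos hz])
  have hdiff : (√a - √(a - u0 z)) * (√a + √(a - u0 z)) = u0 z := by
    linear_combination sq_sqrt (show 0 ≤ a by linarith [u0_pos hz])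
      - sq_sqrt (show 0 ≤ a - u0 z by linarith)
  have hgap : √a - √(a - u0 z) ≤ u0 z / (2 * √(a - u0 z)) := by
    rw [le_div_iff₀ (by positivity)]
    nlinarith
  have hlog := (log_add_sub_log_sub_bounds (sqrt_nonneg _) hw).1
  have hdom : (√a - √(a - u0 z)) / π
      ≤ (log (√(a - u0 z) + √(v0 z)) - log (√(a - u0 z) - √(v0 z))) / (2 * π ^ 2) :=
    calc (√a - √(a - u0 z)) / π ≤ u0 z / (2 * √(a - u0 z)) / π := by gcongr
      _ = 2 * √(v0 z) / √(a - u0 z) / (2 * π ^ 2) := by rw [sqrt_v0_eq hz]; field_simp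
      _ ≤ _ := by gcongr
  rw [mustar_eq, muAiry_eq, log_abs, log_div (by positivity) (by linarith)]
  linarith [sub_div √a √(a - u0 z) π]

noncomputable def massPrimitive (z a : ℝ) : ℝ :=
  2 / (3 * π) * (√(a - u0 z) ^ 3 - √a ^ 3) + logCorrection √(v0 z) √(a - u0 z) / (2 * π ^ 2)

theorem continuous_massPrimitive (z : ℝ) : Continuous (massPrimitive z) := by
  have := continuous_logCorrection √(v0 z)
  unfold massPrimitive
  fun_prop

theorem massPrimitive_zero (hz : z < 0) : massPrimitive z 0 = 0 := by
  simp [massPrimitive, logCorrection, sqrt_eq_zero'.2 (neg_nonpos.2 (u0_pos hz).le),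
    log_neg_eq_log]

theorem hasDerivAt_massPrimitive (hz : z < 0) {a : ℝ} (ha : 0 < a) (hau : a ≠ u0 z)
    (hac : a ≠ u0 z + v0 z) : HasDerivAt (massPrimitive z) (mustar z a - muAiry a) a := by
  have hw : 0 < √(v0 z) := sqrt_pos.2 (v0_pos hz)
  have hau' : a - u0 z ≠ 0 := sub_ne_zero.2 hau
  have hac' : a - u0 z ≠ √(v0 z) ^ 2 := by
    rw [sq_sqrt (v0_pos hz).le]
    contrapose! hac
    linarith
  have hshift := (hasDerivAt_sqrt_pow_three hau').comp_sub_const a (u0 z)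
  have hroot := hasDerivAt_sqrt_pow_three ha.ne'
  have hlog := (hasDerivAt_logCorrection_sqrt hw hau' hac').comp_sub_const a (u0 z)
  refine (((hshift.sub hroot).const_mul (2 / (3 * π))).add
    (hlog.div_const (2 * π ^ 2))).congr_deriv ?_
  rw [mustar_eq, muAiry_eq]
  field_simp
  ring

theorem abs_massPrimitive_le (hz : z < 0) {a : ℝ} (ha : u0 z + v0 z < a) :
    |massPrimitive z a| ≤ (u0 z ^ 2 / π + √(v0 z) ^ 3 / π ^ 2) / √(a - u0 z) := by
  set u := u0 z
  set w := √(v0 z)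
  set s := √(a - u)
  set t := √a
  have hu : 0 < u := u0_pos hz
  have hws : w < s := sqrt_lt_sqrt (v0_pos hz).le (by linarith)
  have hs : 0 < s := (sqrt_nonneg _).trans_lt hws
  have hst : s ≤ t := sqrt_le_sqrt (by linarith)
  have hts : t ^ 2 - s ^ 2 = u := by
    rw [sq_sqrt (by linarith [v0_pos hz]), sq_sqrt (by linarith [v0_pos hz])]
    ring
  have hsplit : massPrimitive z a = (2 / 3 * (s ^ 3 - t ^ 3) + u * s) / π
      + (logCorrection w s - 4 * w * s) / (2 * π ^ 2) := by
    rw [show massPrimitive z a = 2 / (3 * π) * (s ^ 3 - t ^ 3) + logCorrection w s / (2 * π ^ 2)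
      from rfl]
    field_simp
    rw [show w = π * u / 2 from sqrt_v0_eq hz]
    ring
  have hcube := abs_cube_sub_cube_add_mul_le hs hst
  rw [hts] at hcube
  have hlog := abs_logCorrection_sub_le (sqrt_nonneg _) hws
  have h2π : (0 : ℝ) < 2 * π ^ 2 := by positivity
  rw [hsplit]
  calc _ ≤ |2 / 3 * (s ^ 3 - t ^ 3) + u * s| / π
        + |logCorrection w s - 4 * w * s| / (2 * π ^ 2) := by
        refine (abs_add_le _ _).trans_eq ?_
        rw [abs_div, abs_div, abs_of_pos pi_pos, abs_of_pos h2π]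
    _ ≤ u ^ 2 / s / π + 2 * w ^ 3 / s / (2 * π ^ 2) := by gcongr
    _ = _ := by field_simp

theorem tendsto_massPrimitive_atTop (hz : z < 0) : Tendsto (massPrimitive z) atTop (𝓝 0) := by
  have hdecay : Tendsto (fun a => (u0 z ^ 2 / π + √(v0 z) ^ 3 / π ^ 2) / √(a - u0 z)) atTop (𝓝 0) :=
    tendsto_const_nhds.div_atTop
      (tendsto_sqrt_atTop.comp (tendsto_atTop_add_const_right _ _ tendsto_id))
  refine squeeze_zero_norm' ?_ hdecay
  filter_upwards [eventually_gt_atTop (u0 z + v0 z)] with a ha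
  exact (norm_eq_abs _).trans_le (abs_massPrimitive_le hz ha)

end ZeroMass

/-- Zero-mass condition: for `z < 0`, the difference `μ_* − μ_Airy` is Lebesgue
integrable on `ℝ` and its integral vanishes. -/
theorem mustar_zero_mass (z : ℝ) (hz : z < 0) :
    Integrable (fun a : ℝ => mustar z a - muAiry a) ∧
    ∫ a : ℝ, (mustar z a - muAiry a) = 0 := by
  have hu : 0 < u0 z := u0_pos hz
  have huc : u0 z < u0 z + v0 z := lt_add_of_pos_right _ (v0_pos hz)
  have hF := continuous_massPrimitive z
  have hderiv_tail : ∀ a ∈ Ioi (u0 z + v0 z),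
      HasDerivAt (massPrimitive z) (mustar z a - muAiry a) a := fun a ha =>
    hasDerivAt_massPrimitive hz (hu.trans (huc.trans ha)) (huc.trans ha).ne' (ne_of_gt ha)
  have hnonneg_tail : ∀ a ∈ Ioi (u0 z + v0 z), 0 ≤ mustar z a - muAiry a :=
    fun a ha => mustar_sub_muAiry_nonneg hz ha
  have hI₃ := integrableOn_Ioi_deriv_of_nonneg hF.continuousWithinAt hderiv_tail hnonneg_tail
    (tendsto_massPrimitive_atTop hz)
  have hJ₃ := integral_Ioi_of_hasDerivAt_of_nonneg hF.continuousWithinAt hderiv_tail hnonneg_tail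
    (tendsto_massPrimitive_atTop hz)
  obtain ⟨hI₂, hJ₂⟩ := integrableOn_Ioi_and_integral_eq_of_hasDerivAt_of_le huc.le hF.continuousOn
    (fun a ha => hasDerivAt_massPrimitive hz (hu.trans ha.1) ha.1.ne' ha.2.ne)
    (fun a ha => neg_sqrt_div_pi_le_mustar_sub_muAiry ha.2.le) hI₃
  obtain ⟨hI₁, hJ₁⟩ := integrableOn_Ioi_and_integral_eq_of_hasDerivAt_of_le hu.le hF.continuousOn
    (fun a ha => hasDerivAt_massPrimitive hz ha.1 ha.2.ne (ha.2.trans huc).ne)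
    (fun a ha => neg_sqrt_div_pi_le_mustar_sub_muAiry (ha.2.le.trans huc.le)) hI₂
  obtain ⟨hint, hJ⟩ := integrable_and_integral_eq_setIntegral_Ioi
    (fun a ha => mustar_sub_muAiry_of_nonpos hz ha) hI₁
  refine ⟨hint, ?_⟩
  rw [hJ, hJ₁, hJ₂, hJ₃, massPrimitive_zero hz]
  ring
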